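/- Let M = M₁ ⊕ M₂ ⊕ … be a graded algebra (not necessarily associative) over a field. If J is a nonzero ideal of M, let J_gr be the ideal generated by the nonzero homogeneous components of maximal degree of elements of J. Then J_gr is a nonzero graded ideal of M; moreover, if every finitely generated subalgebra of J is nilpotent (J is locally nilpotent), then J_gr is locally nilpotent. -/

import Mathlib

/-!
Write `M_{<d}` for the sum of the `M_i` with `i < d`, and say `v ∈ M_d` (possibly zero) is a
top component of `x` when `x - v ∈ M_{<d}`. Top components are multiplicative: if `v, w` are top
components of `x, y` in degrees `d, e`, then `v w` is the top component of `x y` in degree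
`d + e`. Taking `y = w` homogeneous shows that the span of the nonzero top components of
elements of `J` is already an ideal, so `J_gr` is this span; it is spanned by homogeneous
elements, hence graded, and it is nonzero because every nonzero element has a nonzero top
component. For local nilpotency it suffices to treat finitely many top components `vᵢ` of
elements `xᵢ ∈ J`: a product of length `k` of the `vᵢ` is the top component of the same product
of the `xᵢ`, which vanishes for large `k`, and a homogeneous element of degree `d` lying in
`M_{<d}` is zero.
-/

/-- `ProdLen mul s n x` : x is a product (with some bracketing) of n elements of s. -/
inductive ProdLen {M : Type*} (mul : M → M → M) (s : Set M) : ℕ → M → Prop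
  | base : ∀ a ∈ s, ProdLen mul s 1 a
  | comb : ∀ {m n : ℕ} {a b : M}, ProdLen mul s m a → ProdLen mul s n b →
      ProdLen mul s (m + n) (mul a b)

/-- A subset S is locally nilpotent if every finitely generated subalgebra of S is
    nilpotent: for every finite s ⊆ S all sufficiently long products of elements of s
    vanish. -/
def LocNilp {F M : Type*} [Field F] [AddCommGroup M] [Module F M]
    (mul : M →ₗ[F] M →ₗ[F] M) (S : Set M) : Prop :=
  ∀ s : Finset M, ↑s ⊆ S → ∃ n : ℕ, ∀ k ≥ n, ∀ a : M,
    ProdLen (fun x y => mul x y) ↑s k a → a = 0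

open Submodule

section Graded

variable {R M : Type*} [CommRing R] [AddCommGroup M] [Module R M]

def degLT (𝒜 : ℕ → Submodule R M) (d : ℕ) : Submodule R M := ⨆ i ∈ Finset.range d, 𝒜 i

def IsTopComponent (𝒜 : ℕ → Submodule R M) (d : ℕ) (x v : M) : Prop :=
  v ∈ 𝒜 d ∧ x - v ∈ degLT 𝒜 d

def topComponents (𝒜 : ℕ → Submodule R M) (J : Submodule R M) : Set M :=
  {v | ∃ d : ℕ, v ∈ 𝒜 d ∧ v ≠ 0 ∧ ∃ x ∈ J, x - v ∈ degLT 𝒜 d}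

variable {𝒜 : ℕ → Submodule R M}

theorem mem_degLT_of_mem {i d : ℕ} {a : M} (ha : a ∈ 𝒜 i) (h : i < d) : a ∈ degLT 𝒜 d :=
  mem_iSup_of_mem i (mem_iSup_of_mem (Finset.mem_range.2 h) ha)

theorem degLT_mono : Monotone (degLT 𝒜) := fun _ _ hde =>
  iSup₂_le fun _ hi _ ha => mem_degLT_of_mem ha ((Finset.mem_range.1 hi).trans_le hde)

theorem degLT_zero : degLT 𝒜 0 = ⊥ := by
  simp [degLT]

theorem degLT_succ (d : ℕ) : degLT 𝒜 (d + 1) = degLT 𝒜 d ⊔ 𝒜 d := by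
  rw [degLT, Finset.range_add_one, Finset.iSup_insert, sup_comm, degLT]

theorem exists_mem_degLT (hsup : ⨆ i, 𝒜 i = ⊤) (x : M) : ∃ N, x ∈ degLT 𝒜 N := by
  have hdegLT : ⨆ N, degLT 𝒜 N = ⊤ :=
    top_le_iff.1 <| hsup ▸ iSup_le fun i => le_iSup_of_le (i + 1) fun _ ha =>
      mem_degLT_of_mem ha i.lt_succ_self
  exact (mem_iSup_of_directed _ degLT_mono.directed_le).1 (hdegLT ▸ mem_top)

theorem disjoint_degLT (hind : iSupIndep 𝒜) (d : ℕ) : Disjoint (𝒜 d) (degLT 𝒜 d) :=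
  (hind d).mono_right <| iSup₂_le fun i hi =>
    le_iSup₂_of_le (f := fun j (_ : j ≠ d) => 𝒜 j) i (Finset.mem_range.1 hi).ne le_rfl

theorem isTopComponent_self {d : ℕ} {v : M} (hv : v ∈ 𝒜 d) : IsTopComponent 𝒜 d v v :=
  ⟨hv, by simp⟩

theorem IsTopComponent.mem_degLT_succ {d : ℕ} {x v : M} (h : IsTopComponent 𝒜 d x v) :
    x ∈ degLT 𝒜 (d + 1) := by
  simpa using add_mem (degLT_mono d.le_succ h.2) (mem_degLT_of_mem h.1 d.lt_succ_self)

theorem IsTopComponent.eq_zero (hind : iSupIndep 𝒜) {d : ℕ} {v : M}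
    (h : IsTopComponent 𝒜 d 0 v) : v = 0 :=
  disjoint_def.1 (disjoint_degLT hind d) v h.1 (by simpa using neg_mem h.2)

theorem exists_isTopComponent_ne_zero {x : M} (hx : x ≠ 0) :
    ∀ {N : ℕ}, x ∈ degLT 𝒜 N → ∃ d v, v ≠ 0 ∧ IsTopComponent 𝒜 d x v
  | 0, hN => absurd (by simpa [degLT_zero] using hN) hx
  | N + 1, hN => by
    obtain ⟨y, hy, v, hv, rfl⟩ := mem_sup.1 (degLT_succ (𝒜 := 𝒜) N ▸ hN)
    by_cases hv0 : v = 0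
    · subst hv0
      exact exists_isTopComponent_ne_zero hx (by simpa using hy)
    · exact ⟨N, v, hv0, hv, by simpa using hy⟩

theorem span_eq_iSup_inf_of_subset {ι : Type*} {ℬ : ι → Submodule R M} {S : Set M}
    (hS : S ⊆ ⋃ i, ℬ i) : span R S = ⨆ i, span R S ⊓ ℬ i := by
  refine le_antisymm (span_le.2 fun v hv => ?_) (iSup_le fun _ => inf_le_left)
  obtain ⟨i, hi⟩ := Set.mem_iUnion.1 (hS hv)
  exact mem_iSup_of_mem i ⟨subset_span hv, hi⟩

theorem topComponents_subset_iUnion (J : Submodule R M) :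
    topComponents 𝒜 J ⊆ ⋃ i, (𝒜 i : Set M) := fun _ ⟨d, hv, _⟩ => Set.mem_iUnion.2 ⟨d, hv⟩

theorem IsTopComponent.mem_span_topComponents {J : Submodule R M} {d : ℕ} {x v : M}
    (hx : x ∈ J) (h : IsTopComponent 𝒜 d x v) : v ∈ span R (topComponents 𝒜 J) := by
  by_cases hv : v = 0
  · exact hv ▸ zero_mem _
  · exact subset_span ⟨d, h.1, hv, x, hx, h.2⟩

theorem span_topComponents_ne_bot (hsup : ⨆ i, 𝒜 i = ⊤) {J : Submodule R M} (hJ : J ≠ ⊥) :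
    span R (topComponents 𝒜 J) ≠ ⊥ := by
  obtain ⟨x, hxJ, hx⟩ := exists_mem_ne_zero_of_ne_bot hJ
  obtain ⟨N, hN⟩ := exists_mem_degLT hsup x
  obtain ⟨d, v, hv, h⟩ := exists_isTopComponent_ne_zero hx hN
  exact (Submodule.ne_bot_iff _).2 ⟨v, h.mem_span_topComponents hxJ, hv⟩

section Mul

variable (μ : M →ₗ[R] M →ₗ[R] M)

def IsMulIdeal (P : Submodule R M) : Prop :=
  ∀ a ∈ P, ∀ m : M, μ a m ∈ P ∧ μ m a ∈ P

def mulIdealSpan (S : Set M) : Submodule R M :=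
  sInf {P : Submodule R M | S ⊆ ↑P ∧ IsMulIdeal μ P}

theorem isMulIdeal_mulIdealSpan (S : Set M) : IsMulIdeal μ (mulIdealSpan μ S) :=
  fun _ ha m => ⟨mem_sInf.2 fun P hP => (hP.2 _ (mem_sInf.1 ha P hP) m).1,
    mem_sInf.2 fun P hP => (hP.2 _ (mem_sInf.1 ha P hP) m).2⟩

variable {μ}

theorem mulIdealSpan_eq_span {S : Set M} (h : IsMulIdeal μ (span R S)) :
    mulIdealSpan μ S = span R S :=
  le_antisymm (sInf_le ⟨subset_span, h⟩)
    (span_le.2 fun _ hv => mem_sInf.2 fun _ hP => hP.1 hv)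

theorem isMulIdeal_span_of_span_eq_top {S G : Set M} (hG : span R G = ⊤)
    (h : ∀ v ∈ S, ∀ g ∈ G, μ v g ∈ span R S ∧ μ g v ∈ span R S) :
    IsMulIdeal μ (span R S) := by
  intro a ha m
  have hm : m ∈ span R G := hG ▸ mem_top
  constructor
  · refine map₂_le.1 ?_ a ha m hm
    rw [map₂_span_span, span_le]
    rintro _ ⟨v, hv, g, hg, rfl⟩
    exact (h v hv g hg).1
  · refine map₂_le.1 ?_ m hm a ha
    rw [map₂_span_span, span_le]
    rintro _ ⟨g, hg, v, hv, rfl⟩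
    exact (h v hv g hg).2

theorem ProdLen.mem_span_of_subset_span {s T : Set M} (hsT : s ⊆ span R T) {k : ℕ} {a : M}
    (ha : ProdLen (fun x y => μ x y) s k a) :
    a ∈ span R {c | ProdLen (fun x y => μ x y) T k c} := by
  induction ha with
  | base v hv => exact span_mono (fun c hc => ProdLen.base c hc) (hsT hv)
  | comb _ _ iha ihb =>
    refine map₂_le.1 ?_ _ iha _ ihb
    rw [map₂_span_span, span_le]
    rintro _ ⟨p, hp, q, hq, rfl⟩
    exact subset_span (ProdLen.comb hp hq)

variable (hgraded : ∀ i j : ℕ, ∀ a ∈ 𝒜 i, ∀ b ∈ 𝒜 j, μ a b ∈ 𝒜 (i + j))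
include hgraded

theorem mul_mem_degLT {p q r : ℕ} (hpqr : p + q ≤ r + 1) {a b : M} (ha : a ∈ degLT 𝒜 p)
    (hb : b ∈ degLT 𝒜 q) : μ a b ∈ degLT 𝒜 r := by
  refine map₂_le.1 ?_ a ha b hb
  simp_rw [degLT, map₂_iSup_left, map₂_iSup_right]
  refine iSup₂_le fun i hi => iSup₂_le fun j hj => map₂_le.2 fun a ha b hb => ?_
  rw [Finset.mem_range] at hi hj
  exact mem_degLT_of_mem (hgraded i j a ha b hb) (by omega)

theorem IsTopComponent.mul {d e : ℕ} {x y v w : M} (hv : IsTopComponent 𝒜 d x v)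
    (hw : IsTopComponent 𝒜 e y w) : IsTopComponent 𝒜 (d + e) (μ x y) (μ v w) := by
  refine ⟨hgraded d e v hv.1 w hw.1, ?_⟩
  have hsplit : μ x y - μ v w = μ (x - v) y + μ v (y - w) := by
    simp only [map_sub, LinearMap.sub_apply]
    abel
  rw [hsplit]
  exact add_mem (mul_mem_degLT hgraded (by omega) hv.2 hw.mem_degLT_succ)
    (mul_mem_degLT hgraded (by omega) (mem_degLT_of_mem hv.1 d.lt_succ_self) hw.2)

theorem isMulIdeal_span_topComponents (hsup : ⨆ i, 𝒜 i = ⊤) {J : Submodule R M}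
    (hJ : IsMulIdeal μ J) : IsMulIdeal μ (span R (topComponents 𝒜 J)) := by
  refine isMulIdeal_span_of_span_eq_top (G := ⋃ i, (𝒜 i : Set M))
    (by rw [← iSup_eq_span, hsup]) fun v ⟨d, hv, _, x, hxJ, hxv⟩ g hg => ?_
  obtain ⟨j, hg⟩ := Set.mem_iUnion.1 hg
  exact ⟨(IsTopComponent.mul hgraded ⟨hv, hxv⟩ (isTopComponent_self hg)).mem_span_topComponents
      (hJ x hxJ g).1,
    (IsTopComponent.mul hgraded (isTopComponent_self hg) ⟨hv, hxv⟩).mem_span_topComponents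
      (hJ x hxJ g).2⟩

theorem ProdLen.exists_isTopComponent {T X : Set M}
    (hT : ∀ v ∈ T, ∃ d, ∃ x ∈ X, IsTopComponent 𝒜 d x v) {k : ℕ} {c : M}
    (hc : ProdLen (fun a b => μ a b) T k c) :
    ∃ d x, ProdLen (fun a b => μ a b) X k x ∧ IsTopComponent 𝒜 d x c := by
  induction hc with
  | base v hv =>
    obtain ⟨d, x, hx, h⟩ := hT v hv
    exact ⟨d, x, ProdLen.base x hx, h⟩
  | comb _ _ iha ihb =>
    obtain ⟨d, x, hx, hxa⟩ := iha
    obtain ⟨e, y, hy, hyb⟩ := ihb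
    exact ⟨d + e, μ x y, ProdLen.comb hx hy, hxa.mul hgraded hyb⟩

end Mul

end Graded

section LocallyNilpotent

variable {F M : Type*} [Field F] [AddCommGroup M] [Module F M] {μ : M →ₗ[F] M →ₗ[F] M}

theorem LocNilp.span {S : Set M} (h : LocNilp μ S) : LocNilp μ (Submodule.span F S) := by
  intro s hs
  obtain ⟨T, hTS, hsT⟩ := subset_span_finite_of_subset_span hs
  obtain ⟨n, hn⟩ := h T hTS
  refine ⟨n, fun k hk a ha => ?_⟩
  have hle : Submodule.span F {c | ProdLen (fun x y => μ x y) (T : Set M) k c} ≤ ⊥ :=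
    span_le.2 fun c hc => hn k hk c hc
  simpa using hle (ha.mem_span_of_subset_span hsT)

theorem locNilp_topComponents {𝒜 : ℕ → Submodule F M} (hind : iSupIndep 𝒜)
    (hgraded : ∀ i j : ℕ, ∀ a ∈ 𝒜 i, ∀ b ∈ 𝒜 j, μ a b ∈ 𝒜 (i + j)) {J : Submodule F M}
    (hJ : LocNilp μ J) : LocNilp μ (topComponents 𝒜 J) := by
  classical
  intro T hT
  choose! dg hdg _ lift hliftJ hlift using fun v (hv : v ∈ T) => hT hv
  obtain ⟨n, hn⟩ := hJ (T.image lift) (by simpa [Set.subset_def] using hliftJ)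
  refine ⟨n, fun k hk c hc => ?_⟩
  obtain ⟨d, x, hx, hxc⟩ := hc.exists_isTopComponent hgraded fun v hv =>
    ⟨dg v, lift v, Finset.mem_image_of_mem lift hv, hdg v hv, hlift v hv⟩
  exact (hn k hk x hx ▸ hxc).eq_zero hind

end LocallyNilpotent

theorem graded_top_ideal_general (F M : Type*) [Field F] [AddCommGroup M] [Module F M]
    (mul : M →ₗ[F] M →ₗ[F] M)
    (𝒜 : ℕ → Submodule F M)
    (hinternal : DirectSum.IsInternal 𝒜)
    (hgraded : ∀ i j : ℕ, ∀ a ∈ 𝒜 i, ∀ b ∈ 𝒜 j, mul a b ∈ 𝒜 (i + j))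
    (J : Submodule F M) (hJ : J ≠ ⊥)
    (hJideal : ∀ a ∈ J, ∀ m : M, mul a m ∈ J ∧ mul m a ∈ J) :
    let topSet : Set M :=
      {v | ∃ d : ℕ, v ∈ 𝒜 d ∧ v ≠ 0 ∧ ∃ x ∈ J, x - v ∈ ⨆ i ∈ Finset.range d, 𝒜 i}
    let Jgr : Submodule F M :=
      sInf {P : Submodule F M | topSet ⊆ ↑P ∧ ∀ a ∈ P, ∀ m : M, mul a m ∈ P ∧ mul m a ∈ P}
    Jgr ≠ ⊥ ∧
    (∀ a ∈ Jgr, ∀ m : M, mul a m ∈ Jgr ∧ mul m a ∈ Jgr) ∧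
    (Jgr = ⨆ i : ℕ, (Jgr ⊓ 𝒜 i)) ∧
    (LocNilp mul ↑J → LocNilp mul ↑Jgr) := by
  intro topSet Jgr
  have hsup := hinternal.submodule_iSup_eq_top
  have hJgr : Jgr = span F (topComponents 𝒜 J) :=
    mulIdealSpan_eq_span (isMulIdeal_span_topComponents hgraded hsup hJideal)
  refine ⟨?_, isMulIdeal_mulIdealSpan mul topSet, ?_, fun hLN => ?_⟩
  · exact hJgr ▸ span_topComponents_ne_bot hsup hJ
  · rw [hJgr]
    exact span_eq_iSup_inf_of_subset (topComponents_subset_iUnion J)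
  · rw [hJgr]
    exact (locNilp_topComponents hinternal.submodule_iSupIndep hgraded hLN).span

/-- Let M = M₁ ⊕ M₂ ⊕ … be a graded (nonassociative) algebra over a field and J a
    nonzero ideal. Let J_gr be the ideal generated by the nonzero top homogeneous
    components of elements of J. Then J_gr is a nonzero graded ideal, and if J is
    locally nilpotent then so is J_gr. -/
theorem graded_top_ideal (F M : Type*) [Field F] [AddCommGroup M] [Module F M]
    (mul : M →ₗ[F] M →ₗ[F] M)
    (𝒜 : ℕ → Submodule F M) (h0 : 𝒜 0 = ⊥)
    (hinternal : DirectSum.IsInternal 𝒜)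
    (hgraded : ∀ i j : ℕ, ∀ a ∈ 𝒜 i, ∀ b ∈ 𝒜 j, mul a b ∈ 𝒜 (i + j))
    (J : Submodule F M) (hJ : J ≠ ⊥)
    (hJideal : ∀ a ∈ J, ∀ m : M, mul a m ∈ J ∧ mul m a ∈ J) :
    let topSet : Set M :=
      {v | ∃ d : ℕ, v ∈ 𝒜 d ∧ v ≠ 0 ∧ ∃ x ∈ J, x - v ∈ ⨆ i ∈ Finset.range d, 𝒜 i}
    let Jgr : Submodule F M :=
      sInf {P : Submodule F M | topSet ⊆ ↑P ∧ ∀ a ∈ P, ∀ m : M, mul a m ∈ P ∧ mul m a ∈ P}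
    Jgr ≠ ⊥ ∧
    (∀ a ∈ Jgr, ∀ m : M, mul a m ∈ Jgr ∧ mul m a ∈ Jgr) ∧
    (Jgr = ⨆ i : ℕ, (Jgr ⊓ 𝒜 i)) ∧
    (LocNilp mul ↑J → LocNilp mul ↑Jgr) :=
  graded_top_ideal_general F M mul 𝒜 hinternal hgraded J hJ hJideal
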